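/- arXiv:2108.01525 — 2 statements merged into one kernel-verified Lean document; each statement's English description precedes it below -/
import Mathlib

section
/- Let M ∈ ℝ^{p×n}, λ > 0, and let (v*, w*) be any maximizer over (v,w) in the product of the closed unit Euclidean balls of ℝ^p and ℝ^n of the objective ⟨M, vwᵀ⟩ − λ‖v‖₁. If ‖M‖_{2→∞} > λ, then v* = soft(Mw*, λ)/‖soft(Mw*, λ)‖₂ and w* = Mᵀv*/‖Mᵀv*‖₂ (in particular soft(Mw*,λ) ≠ 0 and Mᵀv* ≠ 0). -/
open MeasureTheory ProbabilityTheory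

noncomputable section

namespace MissInspect

/-- Euclidean (ℓ²) norm of a finite-dimensional real vector. -/
def l2norm {d : ℕ} (v : Fin d → ℝ) : ℝ := Real.sqrt (∑ i, (v i) ^ 2)

/-- ℓ¹ norm. -/
def l1norm {d : ℕ} (v : Fin d → ℝ) : ℝ := ∑ i, |v i|

/-- ℓ∞ norm. -/
def linfNorm {d : ℕ} (v : Fin d → ℝ) : ℝ := ⨆ i, |v i|

/-- Euclidean inner product. -/
def dotp {d : ℕ} (u v : Fin d → ℝ) : ℝ := ∑ i, u i * v i

/-- Acute angle between two vectors. -/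
def angle {d : ℕ} (u v : Fin d → ℝ) : ℝ :=
  Real.arccos (|dotp u v| / (l2norm u * l2norm v))

/-- Entrywise (Hadamard) product of two `p × n` arrays. -/
def hadamard {p n : ℕ} (A B : Fin p → Fin n → ℝ) : Fin p → Fin n → ℝ :=
  fun j t => A j t * B j t

/-- Frobenius norm. -/
def frobNorm {p n : ℕ} (A : Fin p → Fin n → ℝ) : ℝ :=
  Real.sqrt (∑ j, ∑ t, (A j t) ^ 2)

/-- Number of nonzero coordinates. -/
def suppCard {d : ℕ} (v : Fin d → ℝ) : ℕ :=
  (Finset.univ.filter fun i => v i ≠ 0).card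

/-- `L_{j,t}`: number of observations among the first `t` time points in row `j`. -/
def Lcount {p n : ℕ} (Om : Fin p → Fin n → ℝ) (j : Fin p) (t : ℕ) : ℝ :=
  ∑ r : Fin n, if (r : ℕ) < t then Om j r else 0

/-- `R_{j,t}`: number of observations among the last `t` time points in row `j`. -/
def Rcount {p n : ℕ} (Om : Fin p → Fin n → ℝ) (j : Fin p) (t : ℕ) : ℝ :=
  ∑ r : Fin n, if n - t ≤ (r : ℕ) then Om j r else 0

/-- The MissCUSUM transformation.  The column index `t : Fin (n-1)` corresponds to the
paper's (1-based) time index `t+1`. -/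
def missCUSUM {p n : ℕ} (M Om : Fin p → Fin n → ℝ) : Fin p → Fin (n - 1) → ℝ :=
  fun j t =>
    if 0 < Lcount Om j ((t : ℕ) + 1) ∧ 0 < Rcount Om j (n - ((t : ℕ) + 1)) then
      Real.sqrt (Lcount Om j ((t : ℕ) + 1) * Rcount Om j (n - ((t : ℕ) + 1)) /
          Lcount Om j n) *
        ((1 / Rcount Om j (n - ((t : ℕ) + 1))) *
            (∑ r : Fin n, if (t : ℕ) + 1 ≤ (r : ℕ) then M j r * Om j r else 0) -
          (1 / Lcount Om j ((t : ℕ) + 1)) *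
            (∑ r : Fin n, if (r : ℕ) < (t : ℕ) + 1 then M j r * Om j r else 0))
    else 0

/-- The ordinary CUSUM transformation: MissCUSUM with everything observed. -/
def cusum {p n : ℕ} (M : Fin p → Fin n → ℝ) : Fin p → Fin (n - 1) → ℝ :=
  missCUSUM M fun _ _ => 1

/-- `τ = n⁻¹ min(z, n−z)`. -/
def tau (n z : ℕ) : ℝ := ((min z (n - z) : ℕ) : ℝ) / (n : ℝ)

/-- The weighted norm `‖θ‖_{2,q}`. -/
def norm2q {p : ℕ} (θ q : Fin p → ℝ) : ℝ := Real.sqrt (∑ j, (θ j) ^ 2 * q j)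

/-- The mean matrix with a single changepoint at (1-based) location `z`. -/
def meanMat {p : ℕ} (n z : ℕ) (μ1 θ : Fin p → ℝ) : Fin p → Fin n → ℝ :=
  fun j t => if (t : ℕ) < z then μ1 j else μ1 j + θ j

/-- A real random variable is Bernoulli(q): {0,1}-valued with success probability `q`. -/
def IsBernoulli {Ω₀ : Type} [MeasurableSpace Ω₀] (P : Measure Ω₀) (Y : Ω₀ → ℝ) (q : ℝ) :
    Prop :=
  Measurable Y ∧ (∀ ω, Y ω = 0 ∨ Y ω = 1) ∧ P {ω | Y ω = 1} = ENNReal.ofReal q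

/-- `(X, Ω) ~ P_{n,p,z,θ,σ,q}`: the single-changepoint Gaussian data matrix with
row-homogeneous Bernoulli missingness, all entries of `X` and `Ω` jointly independent. -/
def IsModel {Ω₀ : Type} [MeasurableSpace Ω₀] (P : Measure Ω₀) {p : ℕ} (n z : ℕ)
    (μ1 θ : Fin p → ℝ) (σ : ℝ) (q : Fin p → ℝ) (X Om : Ω₀ → Fin p → Fin n → ℝ) : Prop :=
  (∀ j t, Measurable fun ω => X ω j t) ∧
  (∀ j t, Measure.map (fun ω => X ω j t) P =
      gaussianReal (meanMat n z μ1 θ j t) (Real.toNNReal (σ ^ 2))) ∧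
  (∀ j t, IsBernoulli P (fun ω => Om ω j t) (q j)) ∧
  iIndepFun
    (fun (i : Fin p × Fin n ⊕ Fin p × Fin n) ω =>
      Sum.elim (fun jt => X ω jt.1 jt.2) (fun jt => Om ω jt.1 jt.2) i) P

/-- The objective function `⟨T, v wᵀ⟩ − λ‖v‖₁`. -/
def objective {p m : ℕ} (T : Fin p → Fin m → ℝ) (lam : ℝ) (v : Fin p → ℝ)
    (w : Fin m → ℝ) : ℝ :=
  (∑ j, ∑ t, T j t * (v j * w t)) - lam * l1norm v

/-- `(v, w)` maximises the objective over the product of closed unit Euclidean balls. -/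
def IsMaxOnBalls {p m : ℕ} (T : Fin p → Fin m → ℝ) (lam : ℝ) (v : Fin p → ℝ)
    (w : Fin m → ℝ) : Prop :=
  l2norm v ≤ 1 ∧ l2norm w ≤ 1 ∧
    ∀ (v' : Fin p → ℝ) (w' : Fin m → ℝ), l2norm v' ≤ 1 → l2norm w' ≤ 1 →
      objective T lam v' w' ≤ objective T lam v w

/-- The submatrix of odd-numbered (1-based) columns. -/
def oddCols {p n : ℕ} (M : Fin p → Fin n → ℝ) : Fin p → Fin (n / 2) → ℝ :=
  fun j t => M j ⟨2 * (t : ℕ), by have := t.isLt; omega⟩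

/-- The submatrix of even-numbered (1-based) columns. -/
def evenCols {p n : ℕ} (M : Fin p → Fin n → ℝ) : Fin p → Fin (n / 2) → ℝ :=
  fun j t => M j ⟨2 * (t : ℕ) + 1, by have := t.isLt; omega⟩

end MissInspect

namespace MissInspect

/-- `Mw`, the matrix–vector product. -/
def mulVecF {p n : ℕ} (M : Fin p → Fin n → ℝ) (w : Fin n → ℝ) : Fin p → ℝ :=
  fun j => ∑ t, M j t * w t

/-- `Mᵀv`, the vector–matrix product. -/
def vecMulF {p n : ℕ} (M : Fin p → Fin n → ℝ) (v : Fin p → ℝ) : Fin n → ℝ :=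
  fun t => ∑ j, M j t * v j

/-- The `2 → ∞` operator norm `sup{‖Mw‖∞ : ‖w‖₂ ≤ 1}`. -/
def norm2toInf {p n : ℕ} (M : Fin p → Fin n → ℝ) : ℝ :=
  sSup {x | ∃ w : Fin n → ℝ, l2norm w ≤ 1 ∧ x = linfNorm (mulVecF M w)}

/-- The soft-thresholding function. -/
def soft {d : ℕ} (v : Fin d → ℝ) (lam : ℝ) : Fin d → ℝ :=
  fun j => Real.sign (v j) * max (|v j| - lam) 0

/-!
For fixed `w`, the scalar inequality `b x - λ|x| ≤ soft(b, λ) x` (valid for every `x`) bounds the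
objective in `v` by the linear functional `⟨soft(Mw, λ), v⟩`, and the objective attains that
functional's maximum `‖soft(Mw, λ)‖₂` over the unit ball at `v = soft(Mw, λ)/‖soft(Mw, λ)‖₂`. For
fixed `v` the objective is `⟨Mᵀv, w⟩ - λ‖v‖₁`. Hence at a maximiser, `v*` and `w*` each maximise a
linear functional `⟨a, ·⟩` over the unit ball, and the equality case of Cauchy–Schwarz forces them
to be `a/‖a‖₂` as soon as `a ≠ 0`. Both `a`'s are nonzero because the optimal value is positive:
if `|(Mw)ⱼ| > λ` for some unit `w`, the signed coordinate vector `sgn((Mw)ⱼ) eⱼ` already gives the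
value `|(Mw)ⱼ| - λ > 0`.
-/

open scoped RealInnerProductSpace

def normalize {d : ℕ} (v : Fin d → ℝ) : Fin d → ℝ := fun i => v i / l2norm v

section Euclidean

variable {d : ℕ}

lemma l2norm_eq_norm (v : Fin d → ℝ) :
    l2norm v = ‖(WithLp.toLp 2 v : EuclideanSpace ℝ (Fin d))‖ := by
  simp [l2norm, EuclideanSpace.norm_eq]

lemma dotp_eq_inner (u v : Fin d → ℝ) :
    dotp u v = ⟪(WithLp.toLp 2 u : EuclideanSpace ℝ (Fin d)), WithLp.toLp 2 v⟫ := by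
  simp [dotp, PiLp.inner_apply, mul_comm]

lemma l2norm_nonneg (v : Fin d → ℝ) : 0 ≤ l2norm v := Real.sqrt_nonneg _

lemma l2norm_pos {v : Fin d → ℝ} (hv : v ≠ 0) : 0 < l2norm v := by
  rw [l2norm_eq_norm, norm_pos_iff]
  exact fun h => hv (congrArg WithLp.ofLp h)

lemma l2norm_normalize {v : Fin d → ℝ} (hv : v ≠ 0) : l2norm (normalize v) = 1 := by
  have h : (WithLp.toLp 2 (normalize v) : EuclideanSpace ℝ (Fin d)) =
      (l2norm v)⁻¹ • WithLp.toLp 2 v := by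
    ext i; simp [normalize, div_eq_inv_mul]
  rw [l2norm_eq_norm, h, norm_smul, ← l2norm_eq_norm, norm_inv, Real.norm_of_nonneg
    (l2norm_pos hv).le, inv_mul_cancel₀ (l2norm_pos hv).ne']

lemma dotp_normalize (v : Fin d → ℝ) : dotp v (normalize v) = l2norm v := by
  have h : dotp v (normalize v) = (∑ i, v i ^ 2) / l2norm v := by
    simp only [dotp, normalize, Finset.sum_div, mul_div_assoc', sq]
  rw [h, ← Real.sq_sqrt (Finset.sum_nonneg fun i _ => sq_nonneg (v i)), ← l2norm]
  rcases eq_or_ne (l2norm v) 0 with h0 | h0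
  · simp [h0]
  · field_simp

lemma dotp_le_l2norm_mul (u v : Fin d → ℝ) : dotp u v ≤ l2norm u * l2norm v := by
  simpa only [dotp_eq_inner, l2norm_eq_norm] using real_inner_le_norm _ _

lemma eq_normalize_of_forall_dotp_le {a c : Fin d → ℝ} (ha : a ≠ 0) (hc : l2norm c ≤ 1)
    (hmax : ∀ c', l2norm c' ≤ 1 → dotp a c' ≤ dotp a c) : c = normalize a := by
  have hlow : l2norm a ≤ dotp a c :=
    dotp_normalize a ▸ hmax _ (l2norm_normalize ha).le
  have hpos := l2norm_pos ha
  have hc1 : l2norm c = 1 := le_antisymm hc (by nlinarith [dotp_le_l2norm_mul a c])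
  have hcs : l2norm c • a = l2norm a • c := by
    have hcs := inner_eq_norm_mul_iff_real.mp <| show
      ⟪(WithLp.toLp 2 a : EuclideanSpace ℝ (Fin d)), WithLp.toLp 2 c⟫ = _ * _ by
      rw [← dotp_eq_inner, ← l2norm_eq_norm, ← l2norm_eq_norm, hc1, mul_one]
      exact le_antisymm (by simpa [hc1] using dotp_le_l2norm_mul a c) hlow
    simpa only [l2norm_eq_norm, WithLp.ofLp_smul] using congrArg WithLp.ofLp hcs
  funext i
  have hi := congrFun hcs i
  simp only [hc1, Pi.smul_apply, smul_eq_mul, one_mul] at hi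
  rw [normalize, hi, mul_div_cancel_left₀ _ hpos.ne']

end Euclidean

section Soft

variable {d : ℕ}

lemma mul_sub_mul_abs_le_soft_mul {lam : ℝ} (hlam : 0 ≤ lam) (b : Fin d → ℝ) (j : Fin d)
    (x : ℝ) : b j * x - lam * |x| ≤ soft b lam j * x := by
  have hx := neg_abs_le x
  have hx' := le_abs_self x
  rcases lt_trichotomy (b j) 0 with hb | hb | hb
  · rw [soft, Real.sign_of_neg hb, abs_of_neg hb]
    rcases le_total (-b j - lam) 0 with h | h
    · rw [max_eq_right h]; nlinarith [abs_nonneg x]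
    · rw [max_eq_left h]; nlinarith
  · simp only [soft, hb, Real.sign_zero, zero_mul]; nlinarith [abs_nonneg x]
  · rw [soft, Real.sign_of_pos hb, abs_of_pos hb]
    rcases le_total (b j - lam) 0 with h | h
    · rw [max_eq_right h]; nlinarith [abs_nonneg x]
    · rw [max_eq_left h]; nlinarith

lemma mul_soft_sub_mul_abs_soft (b : Fin d → ℝ) (lam : ℝ) (j : Fin d) :
    b j * soft b lam j - lam * |soft b lam j| = soft b lam j ^ 2 := by
  rcases lt_trichotomy (b j) 0 with hb | hb | hb
  · rw [soft, Real.sign_of_neg hb, abs_of_neg hb]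
    rcases le_total (-b j - lam) 0 with h | h
    · simp [max_eq_right h]
    · rw [max_eq_left h, abs_of_nonpos (by linarith)]; ring
  · simp [soft, hb]
  · rw [soft, Real.sign_of_pos hb, abs_of_pos hb]
    rcases le_total (b j - lam) 0 with h | h
    · simp [max_eq_right h]
    · rw [max_eq_left h, abs_of_nonneg (by linarith)]; ring

end Soft

section Objective

variable {p n : ℕ}

lemma objective_eq_dotp_mulVecF (M : Fin p → Fin n → ℝ) (lam : ℝ)
    (v : Fin p → ℝ) (w : Fin n → ℝ) :
    objective M lam v w = dotp (mulVecF M w) v - lam * l1norm v := by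
  simp only [objective, dotp, mulVecF, Finset.sum_mul]
  congr 1
  exact Finset.sum_congr rfl fun j _ => Finset.sum_congr rfl fun t _ => by ring

lemma objective_eq_dotp_vecMulF (M : Fin p → Fin n → ℝ) (lam : ℝ)
    (v : Fin p → ℝ) (w : Fin n → ℝ) :
    objective M lam v w = dotp (vecMulF M v) w - lam * l1norm v := by
  simp only [objective, dotp, vecMulF, Finset.sum_mul]
  rw [Finset.sum_comm]
  congr 1
  exact Finset.sum_congr rfl fun t _ => Finset.sum_congr rfl fun j _ => by ring

lemma objective_le_dotp_soft (M : Fin p → Fin n → ℝ) {lam : ℝ} (hlam : 0 ≤ lam)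
    (v : Fin p → ℝ) (w : Fin n → ℝ) :
    objective M lam v w ≤ dotp (soft (mulVecF M w) lam) v := by
  rw [objective_eq_dotp_mulVecF, dotp, dotp, l1norm, Finset.mul_sum, ← Finset.sum_sub_distrib]
  exact Finset.sum_le_sum fun j _ => mul_sub_mul_abs_le_soft_mul hlam _ j _

lemma objective_normalize_soft (M : Fin p → Fin n → ℝ) (lam : ℝ) (w : Fin n → ℝ) :
    objective M lam (normalize (soft (mulVecF M w) lam)) w =
      l2norm (soft (mulVecF M w) lam) := by
  set s := soft (mulVecF M w) lam
  rw [objective_eq_dotp_mulVecF, ← dotp_normalize s, dotp, dotp, l1norm, Finset.mul_sum,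
    ← Finset.sum_sub_distrib]
  refine Finset.sum_congr rfl fun j _ => ?_
  rw [normalize, abs_div, abs_of_nonneg (l2norm_nonneg s)]
  linear_combination (mul_soft_sub_mul_abs_soft (mulVecF M w) lam j) / l2norm s

lemma exists_objective_pos {M : Fin p → Fin n → ℝ} {lam : ℝ} (hlam : 0 < lam)
    (hgt : lam < norm2toInf M) :
    ∃ v w, l2norm v ≤ 1 ∧ l2norm w ≤ 1 ∧ 0 < objective M lam v w := by
  obtain ⟨_, ⟨w, hw, rfl⟩, hlt⟩ := exists_lt_of_lt_csSup
    (by exact ⟨_, 0, by simp [l2norm], rfl⟩) hgt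
  have : Nonempty (Fin p) := by
    by_contra h
    simp [linfNorm, not_nonempty_iff.mp h] at hlt
    linarith
  obtain ⟨j, hj⟩ := exists_lt_of_lt_ciSup hlt
  have hb : mulVecF M w j ≠ 0 := by rintro h; simp [h] at hj; linarith
  obtain ⟨habs, hmul⟩ : |Real.sign (mulVecF M w j)| = 1 ∧
      mulVecF M w j * Real.sign (mulVecF M w j) = |mulVecF M w j| := by
    rcases hb.lt_or_gt with h | h
    · simp [Real.sign_of_neg h, abs_of_neg h]
    · simp [Real.sign_of_pos h, abs_of_pos h]
  refine ⟨Pi.single j (Real.sign (mulVecF M w j)), w, ?_, hw, ?_⟩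
  · simp [l2norm, Pi.single_apply, ← sq_abs (Real.sign _), habs]
  · simp [objective_eq_dotp_mulVecF, dotp, l1norm, Pi.single_apply, apply_ite abs, habs, hmul]
    linarith

end Objective

/-- Lemma 1, case `‖M‖_{2→∞} > λ`: fixed-point characterisation of the maximiser. -/
theorem statement_9 (p n : ℕ) (M : Fin p → Fin n → ℝ) (lam : ℝ) (hlam : 0 < lam)
    (vstar : Fin p → ℝ) (wstar : Fin n → ℝ) (hmax : IsMaxOnBalls M lam vstar wstar)
    (hgt : lam < norm2toInf M) :
    soft (mulVecF M wstar) lam ≠ 0 ∧ vecMulF M vstar ≠ 0 ∧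
      vstar = (fun j => soft (mulVecF M wstar) lam j / l2norm (soft (mulVecF M wstar) lam)) ∧
      wstar = (fun t => vecMulF M vstar t / l2norm (vecMulF M vstar)) := by
  obtain ⟨hv, hw, hopt⟩ := hmax
  have hpos : 0 < objective M lam vstar wstar := by
    obtain ⟨v, w, hv', hw', hvw⟩ := exists_objective_pos hlam hgt
    exact hvw.trans_le (hopt v w hv' hw')
  set s := soft (mulVecF M wstar) lam
  have hs : s ≠ 0 := by
    rintro hs
    have h : objective M lam vstar wstar ≤ dotp s vstar :=
      objective_le_dotp_soft M hlam.le vstar wstar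
    simp only [hs, dotp, Pi.zero_apply, zero_mul, Finset.sum_const_zero] at h
    linarith
  have hd : vecMulF M vstar ≠ 0 := by
    rintro hd
    have h := objective_eq_dotp_vecMulF M lam vstar wstar
    simp only [hd, dotp, Pi.zero_apply, zero_mul, Finset.sum_const_zero, zero_sub] at h
    have hl1 : 0 ≤ l1norm vstar := Finset.sum_nonneg fun j _ => abs_nonneg (vstar j)
    linarith [mul_nonneg hlam.le hl1]
  refine ⟨hs, hd, eq_normalize_of_forall_dotp_le hs hv fun v hv' => ?_,
    eq_normalize_of_forall_dotp_le hd hw fun w hw' => ?_⟩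
  · calc dotp s v ≤ l2norm s :=
          (dotp_le_l2norm_mul s v).trans (mul_le_of_le_one_right (l2norm_nonneg s) hv')
      _ = objective M lam (normalize s) wstar := (objective_normalize_soft M lam wstar).symm
      _ ≤ objective M lam vstar wstar := hopt _ _ (l2norm_normalize hs).le hw
      _ ≤ dotp s vstar := objective_le_dotp_soft M hlam.le vstar wstar
  · have h := hopt vstar w hv hw'
    rw [objective_eq_dotp_vecMulF, objective_eq_dotp_vecMulF] at h
    linarith

end MissInspect
end
end

section
/- For any 1 ≤ z₁ < z₂ ≤ n−1, the total variation distance between the two single-changepoint laws satisfies 1 − d_TV(P_{n,p,z₁,θ,σ,q}, P_{n,p,z₂,θ,σ,q}) ≥ ∏_{j : θ_j ≠ 0} (1 − q_j)^{z₂ − z₁}. -/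
/-
If no coordinate `j` with `θ j ≠ 0` is observed at the `z₂ - z₁` times between the two
changepoints, then the observed data cannot distinguish a change at `z₁` from a change at `z₂`:
shifting the Gaussian part by the difference of the two mean matrices maps one full law onto the
other and does not change the observed data on that event. Hence the two observed laws agree on
this event, and its probability `∏_{θ j ≠ 0} (1 - q j) ^ (z₂ - z₁)` bounds `1 - d_TV` from below.
-/

open MeasureTheory ProbabilityTheory

noncomputable section

namespace MissInspect

open MeasureTheory ProbabilityTheory

/-- The Bernoulli(q) law on ℝ, supported on {0,1}. -/
def bernMeasure (q : ℝ) : Measure ℝ :=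
  ENNReal.ofReal q • Measure.dirac 1 + ENNReal.ofReal (1 - q) • Measure.dirac 0

instance (q : ℝ) : IsFiniteMeasure (bernMeasure q) := by
  constructor
  simp only [bernMeasure, Measure.coe_add, Measure.coe_smul, Pi.add_apply, Pi.smul_apply,
    smul_eq_mul]
  exact ENNReal.add_lt_top.mpr
    ⟨ENNReal.mul_lt_top ENNReal.ofReal_lt_top (measure_lt_top _ _),
      ENNReal.mul_lt_top ENNReal.ofReal_lt_top (measure_lt_top _ _)⟩

/-- The joint law of `(X, Ω)` under `P_{n,p,z,θ,σ,q}` (with pre-change mean `μ1`). -/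
def fullLaw {p : ℕ} (n z : ℕ) (μ1 θ : Fin p → ℝ) (σ : ℝ) (q : Fin p → ℝ) :
    Measure ((Fin p → Fin n → ℝ) × (Fin p → Fin n → ℝ)) :=
  (Measure.pi fun j => Measure.pi fun t =>
      gaussianReal (meanMat n z μ1 θ j t) (Real.toNNReal (σ ^ 2))).prod
    (Measure.pi fun j => Measure.pi fun _t => bernMeasure (q j))

/-- The joint law of `(X ∘ Ω, Ω)` under `P_{n,p,z,θ,σ,q}`. -/
def obsLaw {p : ℕ} (n z : ℕ) (μ1 θ : Fin p → ℝ) (σ : ℝ) (q : Fin p → ℝ) :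
    Measure ((Fin p → Fin n → ℝ) × (Fin p → Fin n → ℝ)) :=
  Measure.map (fun xo => (hadamard xo.1 xo.2, xo.2)) (fullLaw n z μ1 θ σ q)

end MissInspect

namespace MissInspect

open MeasureTheory ProbabilityTheory

/-- The total variation distance `sup_B |P(B) − Q(B)|`. -/
def tvDist {α : Type} [MeasurableSpace α] (μ ν : Measure α) : ℝ :=
  sSup {x | ∃ B, MeasurableSet B ∧ x = |(μ B).toReal - (ν B).toReal|}

open Finset

theorem tvDist_le_one_sub_of_restrict_eq {α : Type} [MeasurableSpace α] {μ ν : Measure α}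
    [IsProbabilityMeasure μ] [IsProbabilityMeasure ν] {A : Set α} (hA : MeasurableSet A)
    (h : μ.restrict A = ν.restrict A) : tvDist μ ν ≤ 1 - μ.real A := by
  have hinter : ∀ B, MeasurableSet B → μ.real (B ∩ A) = ν.real (B ∩ A) := fun B hB => by
    simp only [Measure.real, ← Measure.restrict_apply hB, h]
  have hνA : ν.real A = μ.real A := by
    simpa using (hinter Set.univ MeasurableSet.univ).symm
  refine csSup_le ⟨_, ∅, MeasurableSet.empty, rfl⟩ ?_
  rintro _ ⟨B, hB, rfl⟩
  have hμ : μ.real (B \ A) ≤ 1 - μ.real A := by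
    rw [← probReal_compl_eq_one_sub hA]
    exact measureReal_mono fun _ hx => hx.2
  have hν : ν.real (B \ A) ≤ 1 - μ.real A := by
    rw [← hνA, ← probReal_compl_eq_one_sub hA]
    exact measureReal_mono fun _ hx => hx.2
  change |μ.real B - ν.real B| ≤ 1 - μ.real A
  rw [← measureReal_inter_add_sdiff (s := B) hA,
    ← measureReal_inter_add_sdiff (μ := ν) (s := B) hA, hinter B hB, abs_le]
  constructor <;> linarith [measureReal_nonneg (μ := μ) (s := B \ A),
    measureReal_nonneg (μ := ν) (s := B \ A)]

theorem restrict_map_eq_of_measurePreserving {α β : Type*} [MeasurableSpace α]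
    [MeasurableSpace β] {μ ν : Measure α} {ψ : α → α} (hψ : MeasurePreserving ψ ν μ)
    {F : α → β} (hF : Measurable F) {A : Set β} (hA : MeasurableSet A)
    (hψA : ∀ w, F (ψ w) ∈ A ↔ F w ∈ A) (hFψ : ∀ w, F w ∈ A → F (ψ w) = F w) :
    (μ.map F).restrict A = (ν.map F).restrict A := by
  rw [← hψ.map_eq, Measure.map_map hF hψ.measurable,
    Measure.restrict_map (hF.comp hψ.measurable) hA, Measure.restrict_map hF hA,
    show (F ∘ ψ) ⁻¹' A = F ⁻¹' A from Set.ext hψA]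
  exact Measure.map_congr ((ae_restrict_mem (hF hA)).mono hFψ)

theorem bernMeasure_singleton_zero (q : ℝ) : bernMeasure q {0} = ENNReal.ofReal (1 - q) := by
  simp [bernMeasure]

theorem isProbabilityMeasure_bernMeasure {q : ℝ} (h0 : 0 ≤ q) (h1 : q ≤ 1) :
    IsProbabilityMeasure (bernMeasure q) :=
  ⟨by simp [bernMeasure, ← ENNReal.ofReal_add h0 (sub_nonneg.2 h1)]⟩

section Model

variable {p n : ℕ}

theorem measurable_hadamard_prod :
    Measurable fun xo : (Fin p → Fin n → ℝ) × (Fin p → Fin n → ℝ) =>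
      (hadamard xo.1 xo.2, xo.2) := by
  unfold hadamard
  fun_prop

theorem isProbabilityMeasure_obsLaw (n z : ℕ) (μ1 θ : Fin p → ℝ) (σ : ℝ) {q : Fin p → ℝ}
    (hq : ∀ j, 0 ≤ q j ∧ q j ≤ 1) : IsProbabilityMeasure (obsLaw n z μ1 θ σ q) := by
  have := fun j => isProbabilityMeasure_bernMeasure (hq j).1 (hq j).2
  have : IsProbabilityMeasure (fullLaw n z μ1 θ σ q) := by
    unfold fullLaw
    infer_instance
  exact Measure.isProbabilityMeasure_map measurable_hadamard_prod.aemeasurable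

theorem obsLaw_univ_prod (z : ℕ) (μ1 θ : Fin p → ℝ) (σ : ℝ) (q : Fin p → ℝ)
    {S : Set (Fin p → Fin n → ℝ)} (hS : MeasurableSet S) :
    obsLaw n z μ1 θ σ q (Set.univ ×ˢ S) =
      (Measure.pi fun j => Measure.pi fun _ : Fin n => bernMeasure (q j)) S := by
  rw [obsLaw, Measure.map_apply measurable_hadamard_prod (MeasurableSet.univ.prod hS)]
  change fullLaw n z μ1 θ σ q (Set.univ ×ˢ S) = _
  rw [fullLaw, Measure.prod_prod, measure_univ, one_mul]

theorem measurePreserving_fullLaw_shift (z z' : ℕ) (μ1 θ : Fin p → ℝ) (σ : ℝ)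
    (q : Fin p → ℝ) :
    MeasurePreserving
      (Prod.map (fun (x : Fin p → Fin n → ℝ) j t =>
        x j t + (meanMat n z μ1 θ j t - meanMat n z' μ1 θ j t)) id)
      (fullLaw n z' μ1 θ σ q) (fullLaw n z μ1 θ σ q) := by
  refine MeasurePreserving.prod (measurePreserving_pi _ _ fun j =>
    measurePreserving_pi _ _ fun t => ⟨measurable_add_const _, ?_⟩) (.id _)
  rw [gaussianReal_map_add_const, add_sub_cancel]

/-- In the paper's 1-based time these are the times `z₁ < t ≤ z₂`. -/
def changeBlock (n z₁ z₂ : ℕ) : Finset (Fin n) :=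
  univ.filter fun t => z₁ ≤ (t : ℕ) ∧ (t : ℕ) < z₂

theorem card_changeBlock {z₁ z₂ : ℕ} (h : z₂ ≤ n) : #(changeBlock n z₁ z₂) = z₂ - z₁ := by
  have : changeBlock n z₁ z₂ =
      (Ico z₁ z₂).attachFin fun m hm => (mem_Ico.1 hm).2.trans_le h := by
    ext t
    simp [changeBlock]
  rw [this, card_attachFin, Nat.card_Ico]

theorem meanMat_sub_meanMat {z₁ z₂ : ℕ} (hz : z₁ ≤ z₂) (μ1 θ : Fin p → ℝ) (j : Fin p)
    (t : Fin n) :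
    meanMat n z₁ μ1 θ j t - meanMat n z₂ μ1 θ j t =
      if t ∈ changeBlock n z₁ z₂ then θ j else 0 := by
  simp only [meanMat, changeBlock, mem_filter, mem_univ, true_and]
  split_ifs <;> first | (exfalso; omega) | ring

def unobservedOnChange (n z₁ z₂ : ℕ) (θ : Fin p → ℝ) : Set (Fin p → Fin n → ℝ) :=
  (↑(univ.filter fun j => θ j ≠ 0) : Set (Fin p)).pi fun _ =>
    (↑(changeBlock n z₁ z₂) : Set (Fin n)).pi fun _ => {0}

theorem measurableSet_unobservedOnChange (z₁ z₂ : ℕ) (θ : Fin p → ℝ) :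
    MeasurableSet (unobservedOnChange n z₁ z₂ θ) :=
  .pi (countable_toSet _) fun _ _ =>
    .pi (countable_toSet _) fun _ _ => measurableSet_singleton 0

theorem hadamard_shift_of_mem_unobservedOnChange {z₁ z₂ : ℕ} (hz : z₁ ≤ z₂)
    (μ1 θ : Fin p → ℝ) (x : Fin p → Fin n → ℝ) {o : Fin p → Fin n → ℝ}
    (ho : o ∈ unobservedOnChange n z₁ z₂ θ) :
    hadamard (fun j t => x j t + (meanMat n z₁ μ1 θ j t - meanMat n z₂ μ1 θ j t)) o =
      hadamard x o := by
  funext j t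
  simp only [hadamard, meanMat_sub_meanMat hz]
  split_ifs with ht
  · by_cases hθ : θ j = 0
    · simp [hθ]
    · have hot : o j t = 0 := ho j (by simp [hθ]) t ht
      simp [hot]
  · simp

theorem pi_bernMeasure_unobservedOnChange {z₁ z₂ : ℕ} (hz : z₂ ≤ n) (θ : Fin p → ℝ)
    {q : Fin p → ℝ} (hq : ∀ j, 0 ≤ q j ∧ q j ≤ 1) :
    (Measure.pi fun j => Measure.pi fun _ : Fin n => bernMeasure (q j))
        (unobservedOnChange n z₁ z₂ θ) =
      ∏ j ∈ univ.filter fun j => θ j ≠ 0, ENNReal.ofReal (1 - q j) ^ (z₂ - z₁) := by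
  have := fun j => isProbabilityMeasure_bernMeasure (hq j).1 (hq j).2
  simp only [unobservedOnChange, Measure.pi_pi_finset, bernMeasure_singleton_zero, prod_const,
    card_changeBlock hz]

end Model

theorem statement_18_general (n p : ℕ)
    (μ1 θ : Fin p → ℝ)
    (σ : ℝ) (q : Fin p → ℝ) (hq : ∀ j, 0 < q j ∧ q j ≤ 1)
    (z₁ z₂ : ℕ) (hz12 : z₁ < z₂) (hz2 : z₂ ≤ n - 1) :
    ∏ j ∈ Finset.univ.filter (fun j => θ j ≠ 0), (1 - q j) ^ (z₂ - z₁) ≤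
      1 - tvDist (obsLaw n z₁ μ1 θ σ q) (obsLaw n z₂ μ1 θ σ q) := by
  have hq' : ∀ j, 0 ≤ q j ∧ q j ≤ 1 := fun j => ⟨(hq j).1.le, (hq j).2⟩
  have := isProbabilityMeasure_obsLaw n z₁ μ1 θ σ hq'
  have := isProbabilityMeasure_obsLaw n z₂ μ1 θ σ hq'
  set A : Set ((Fin p → Fin n → ℝ) × (Fin p → Fin n → ℝ)) :=
    Set.univ ×ˢ unobservedOnChange n z₁ z₂ θ
  have hA : MeasurableSet A :=
    MeasurableSet.univ.prod (measurableSet_unobservedOnChange z₁ z₂ θ)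
  have hagree : (obsLaw n z₁ μ1 θ σ q).restrict A = (obsLaw n z₂ μ1 θ σ q).restrict A :=
    restrict_map_eq_of_measurePreserving (measurePreserving_fullLaw_shift z₁ z₂ μ1 θ σ q)
      measurable_hadamard_prod hA (fun _ => Iff.rfl) fun w hw =>
        Prod.ext (hadamard_shift_of_mem_unobservedOnChange hz12.le μ1 θ w.1 hw.2) rfl
  have hmass : (obsLaw n z₁ μ1 θ σ q).real A =
      ∏ j ∈ Finset.univ.filter (fun j => θ j ≠ 0), (1 - q j) ^ (z₂ - z₁) := by
    rw [Measure.real, obsLaw_univ_prod _ _ _ _ _ (measurableSet_unobservedOnChange z₁ z₂ θ),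
      pi_bernMeasure_unobservedOnChange (by omega) θ hq', ENNReal.toReal_prod]
    exact prod_congr rfl fun j _ => by
      rw [ENNReal.toReal_pow, ENNReal.toReal_ofReal (sub_nonneg.2 (hq j).2)]
  linarith [tvDist_le_one_sub_of_restrict_eq hA hagree]

/-- Lower bound on the testing affinity between two single-changepoint laws. -/
theorem statement_18 (n p : ℕ) (hn : 2 ≤ n)
    (μ1 θ : Fin p → ℝ) (hθ : θ ≠ 0)
    (σ : ℝ) (hσ : 0 < σ) (q : Fin p → ℝ) (hq : ∀ j, 0 < q j ∧ q j ≤ 1)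
    (z₁ z₂ : ℕ) (hz1 : 1 ≤ z₁) (hz12 : z₁ < z₂) (hz2 : z₂ ≤ n - 1) :
    ∏ j ∈ Finset.univ.filter (fun j => θ j ≠ 0), (1 - q j) ^ (z₂ - z₁) ≤
      1 - tvDist (obsLaw n z₁ μ1 θ σ q) (obsLaw n z₂ μ1 θ σ q) :=
  statement_18_general n p μ1 θ σ q hq z₁ z₂ hz12 hz2

end MissInspect
end
end
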